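/- arXiv:2109.04640 — 3 statements merged into one kernel-verified Lean document; each statement's English description precedes it below -/
import Mathlib

section
/- Let S and A be finite sets, let p̄ be a probability distribution on S × A with full support, and define the operator P^π on functions f : S × A → ℝ by (P^π f)(s,a) = Σ_{s'} p(s'|s,a) Σ_{a'} π(a'|s') f(s',a'). For a fixed discount 0 ≤ γ < 1, define Υ = inf { Ē[((I - γP^π)f(S,A))²] : f with Ē[f(S,A)²] ≥ 1 } and χ = sup { Ē[(E_{(S',A') ∼ d^π(·,·|S,A)}[f(S',A')])²] : f with Ē[f(S,A)²] ≤ 1 }, where Ē denotes expectation over (S,A) ∼ p̄ and d^π(s',a'|s,a) = (1-γ) Σ_{t=0}^∞ γ^t p_t^π(s',a'|S_0=s, A_0=a) is the conditional discounted visitation distribution. Then Υ is bounded below by a positive constant if and only if χ < ∞, and in that case Υ = (1-γ)²/χ. -/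
/-!
The operator `D f = E_{d^π(·|x)}[f]` is `(1 - γ)` times the Neumann series `∑ γᵗ (P^π)ᵗ`, which
converges because `P^π` is row stochastic, so `‖γ P^π‖ ≤ γ < 1` in the `ℓ^∞` operator norm. Hence
`D (I - γ P^π) = (I - γ P^π) D = (1 - γ) I`. For any pair of linear maps with `D T = T D = k I` and
any positive definite quadratic form `q`, substituting `f = D g` turns a lower bound
`q (T f) ≥ c q f` into the upper bound `q (D g) ≤ (k² / c) q g` and back, so
`inf {q (T f) : q f ≥ 1} = k² / sup {q (D g) : q g ≤ 1}`.
-/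

open Matrix

namespace QuadraticMap

variable {V : Type*} [AddCommGroup V] [Module ℝ V] {q : QuadraticForm ℝ V}

theorem map_smul_eq_sq_mul (q : QuadraticForm ℝ V) (k : ℝ) (v : V) :
    q (k • v) = k ^ 2 * q v := by
  rw [QuadraticMap.map_smul, smul_eq_mul, pow_two]

theorem posDef_weightedSumSquares {ι : Type*} [Fintype ι] {w : ι → ℝ} (hw : ∀ i, 0 < w i) :
    (weightedSumSquares ℝ w).PosDef := by
  intro v hv
  obtain ⟨i, hi⟩ := Function.ne_iff.1 hv
  rw [weightedSumSquares_apply]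
  exact Finset.sum_pos' (fun j _ => smul_nonneg (hw j).le (mul_self_nonneg _))
    ⟨i, Finset.mem_univ i, smul_pos (hw i) (mul_self_pos.2 hi)⟩

namespace PosDef

theorem exists_map_smul_eq_one (hq : q.PosDef) {v : V} (hv : v ≠ 0) :
    ∃ r : ℝ, q (r • v) = 1 ∧ ∀ w, q w = q v * q (r • w) := by
  have hpos := hq v hv
  refine ⟨(√(q v))⁻¹, ?_, fun w => ?_⟩ <;>
    simp only [QuadraticMap.map_smul, smul_eq_mul, ← mul_inv, Real.mul_self_sqrt hpos.le] <;>
    field_simp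

theorem map_le_mul_of_forall_map_le (hq : q.PosDef) (g : V →ₗ[ℝ] V) {C : ℝ}
    (h : ∀ v, q v ≤ 1 → q (g v) ≤ C) (v : V) : q (g v) ≤ C * q v := by
  rcases eq_or_ne v 0 with rfl | hv
  · simp
  obtain ⟨r, hr, hscale⟩ := hq.exists_map_smul_eq_one hv
  rw [hscale (g v), mul_comm, ← map_smul]
  exact mul_le_mul_of_nonneg_right (h _ hr.le) (hq.nonneg v)

theorem mul_le_map_of_forall_le_map (hq : q.PosDef) (g : V →ₗ[ℝ] V) {c : ℝ}
    (h : ∀ v, 1 ≤ q v → c ≤ q (g v)) (v : V) : c * q v ≤ q (g v) := by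
  rcases eq_or_ne v 0 with rfl | hv
  · simp
  obtain ⟨r, hr, hscale⟩ := hq.exists_map_smul_eq_one hv
  rw [hscale (g v), mul_comm, ← map_smul]
  exact mul_le_mul_of_nonneg_left (h _ hr.ge) (hq.nonneg v)

variable {T D : V →ₗ[ℝ] V} {k : ℝ}

theorem exists_pos_le_iff_bddAbove (hq : q.PosDef) (hDT : ∀ v, D (T v) = k • v)
    (hTD : ∀ v, T (D v) = k • v) (hk : k ≠ 0) :
    (∃ c > 0, ∀ u ∈ {u : ℝ | ∃ f, 1 ≤ q f ∧ u = q (T f)}, c ≤ u) ↔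
      BddAbove {u : ℝ | ∃ f, q f ≤ 1 ∧ u = q (D f)} := by
  have hk2 : 0 < k ^ 2 := by positivity
  constructor
  · rintro ⟨c, hc, hlow⟩
    have hT := hq.mul_le_map_of_forall_le_map T fun f hf => hlow _ ⟨f, hf, rfl⟩
    refine ⟨k ^ 2 / c, ?_⟩
    rintro _ ⟨g, hg, rfl⟩
    rw [le_div_iff₀ hc, mul_comm]
    calc c * q (D g) ≤ q (T (D g)) := hT (D g)
      _ = k ^ 2 * q g := by rw [hTD, map_smul_eq_sq_mul]
      _ ≤ k ^ 2 := mul_le_of_le_one_right hk2.le hg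
  · rintro ⟨C, hC⟩
    have hD := hq.map_le_mul_of_forall_map_le D fun g hg => hC ⟨g, hg, rfl⟩
    have hC0 : 0 ≤ C := hC ⟨0, by simp, by simp⟩
    refine ⟨k ^ 2 / (C + 1), by positivity, ?_⟩
    rintro _ ⟨f, hf, rfl⟩
    rw [div_le_iff₀ (by positivity)]
    calc k ^ 2 ≤ k ^ 2 * q f := le_mul_of_one_le_right hk2.le hf
      _ = q (D (T f)) := by rw [hDT, map_smul_eq_sq_mul]
      _ ≤ C * q (T f) := hD (T f)
      _ ≤ q (T f) * (C + 1) := by nlinarith [hq.nonneg (T f)]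

theorem sInf_eq_sq_div_sSup (hq : q.PosDef) (hDT : ∀ v, D (T v) = k • v)
    (hTD : ∀ v, T (D v) = k • v) (hk : k ≠ 0)
    (hbdd : BddAbove {u : ℝ | ∃ f, q f ≤ 1 ∧ u = q (D f)}) :
    sInf {u : ℝ | ∃ f, 1 ≤ q f ∧ u = q (T f)} =
      k ^ 2 / sSup {u : ℝ | ∃ f, q f ≤ 1 ∧ u = q (D f)} := by
  set χs := {u : ℝ | ∃ f, q f ≤ 1 ∧ u = q (D f)}
  set Υs := {u : ℝ | ∃ f, 1 ≤ q f ∧ u = q (T f)}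
  have hk2 : 0 < k ^ 2 := by positivity
  have hχs : (0 : ℝ) ∈ χs := ⟨0, by simp, by simp⟩
  have hχ0 : 0 ≤ sSup χs := le_csSup hbdd hχs
  have hD := hq.map_le_mul_of_forall_map_le D fun g hg => le_csSup hbdd ⟨g, hg, rfl⟩
  have hlow : ∀ f, 1 ≤ q f → k ^ 2 ≤ sSup χs * q (T f) := fun f hf =>
    calc k ^ 2 ≤ k ^ 2 * q f := le_mul_of_one_le_right hk2.le hf
      _ = q (D (T f)) := by rw [hDT, map_smul_eq_sq_mul]
      _ ≤ sSup χs * q (T f) := hD (T f)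
  rcases hχ0.eq_or_lt with hχ | hχ
  -- `sSup χs = 0` only for `V = 0`: then `Υs = ∅`, and both sides are `0` by convention.
  · have hΥs : Υs = ∅ := by
      refine Set.eq_empty_of_forall_notMem ?_
      rintro _ ⟨f, hf, rfl⟩
      have := hlow f hf
      rw [← hχ, zero_mul] at this
      linarith
    rw [hΥs, ← hχ, Real.sInf_empty, div_zero]
  -- A near-maximiser `g` of `q ∘ D` gives the near-minimiser `D g / √(q (D g))` of `q ∘ T`.
  have happrox : ∀ w, k ^ 2 / sSup χs < w → ∃ a ∈ Υs, a < w := by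
    intro w hw
    have hw0 : 0 < w := lt_trans (by positivity) hw
    obtain ⟨_, ⟨g, hg, rfl⟩, hlt⟩ := exists_lt_of_lt_csSup ⟨0, hχs⟩
      ((div_lt_iff₀ hw0).2 ((div_lt_iff₀' hχ).1 hw))
    have hDg : 0 < q (D g) := lt_trans (by positivity) hlt
    obtain ⟨r, hr, hscale⟩ := hq.exists_map_smul_eq_one (v := D g) fun h => by simp [h] at hDg
    refine ⟨q (T (r • D g)), ⟨r • D g, hr.ge, rfl⟩, ?_⟩
    have hTDg : q (D g) * q (T (r • D g)) ≤ k ^ 2 := by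
      rw [map_smul, ← hscale, hTD, map_smul_eq_sq_mul]
      exact mul_le_of_le_one_right hk2.le hg
    rw [div_lt_iff₀ hw0] at hlt
    nlinarith
  refine csInf_eq_of_forall_ge_of_forall_gt_exists_lt ?_ ?_ happrox
  · obtain ⟨a, ha, -⟩ := happrox _ (lt_add_one _)
    exact ⟨a, ha⟩
  · rintro _ ⟨f, hf, rfl⟩
    exact div_le_of_le_mul₀ hχ0 (hq.nonneg _) (by linarith [hlow f hf])

end PosDef

end QuadraticMap

namespace Matrix

variable {n : Type*} [Fintype n] [DecidableEq n] {M : Matrix n n ℝ} {γ : ℝ}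

attribute [local instance] Matrix.linftyOpNormedRing Matrix.linftyOpNormedAlgebra

theorem linfty_opNorm_le_one_of_mem_rowStochastic (hM : M ∈ rowStochastic ℝ n) : ‖M‖ ≤ 1 := by
  rw [linfty_opNorm_def, NNReal.coe_le_one, Finset.sup_le_iff]
  intro i _
  rw [← NNReal.coe_le_one, NNReal.coe_sum]
  simp only [coe_nnnorm, Real.norm_eq_abs, abs_of_nonneg (nonneg_of_mem_rowStochastic hM),
    sum_row_of_mem_rowStochastic hM i, le_refl]

theorem norm_smul_lt_one_of_mem_rowStochastic (hM : M ∈ rowStochastic ℝ n) (hγ : |γ| < 1) :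
    ‖γ • M‖ < 1 :=
  calc ‖γ • M‖ ≤ ‖γ‖ * ‖M‖ := norm_smul_le γ M
    _ ≤ |γ| * 1 := by
      rw [Real.norm_eq_abs]
      exact mul_le_mul_of_nonneg_left (linfty_opNorm_le_one_of_mem_rowStochastic hM) (abs_nonneg γ)
    _ < 1 := by rwa [mul_one]

theorem tsum_smul_pow_apply (hM : M ∈ rowStochastic ℝ n) (hγ : |γ| < 1) (i j : n) :
    (∑' t : ℕ, (γ • M) ^ t) i j = ∑' t : ℕ, γ ^ t * (M ^ t) i j := by
  have hs := summable_geometric_of_norm_lt_one (norm_smul_lt_one_of_mem_rowStochastic hM hγ)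
  have h : HasSum (fun t : ℕ => ((γ • M) ^ t) i j) ((∑' t : ℕ, (γ • M) ^ t) i j) :=
    Pi.hasSum.1 (Pi.hasSum.1 hs.hasSum i) j
  simpa only [smul_pow, Matrix.smul_apply, smul_eq_mul] using h.tsum_eq.symm

theorem tsum_smul_pow_mul_one_sub (hM : M ∈ rowStochastic ℝ n) (hγ : |γ| < 1) :
    (∑' t : ℕ, (γ • M) ^ t) * (1 - γ • M) = 1 :=
  geom_series_mul_neg _ (norm_smul_lt_one_of_mem_rowStochastic hM hγ)

theorem one_sub_mul_tsum_smul_pow (hM : M ∈ rowStochastic ℝ n) (hγ : |γ| < 1) :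
    (1 - γ • M) * ∑' t : ℕ, (γ • M) ^ t = 1 :=
  mul_neg_geom_series _ (norm_smul_lt_one_of_mem_rowStochastic hM hγ)

end Matrix

section Chain

variable {S A : Type*} [Fintype S] [Fintype A] (p : S → A → S → ℝ) (π : S → A → ℝ)

def transitionMatrix : Matrix (S × A) (S × A) ℝ :=
  Matrix.of fun x y => p x.1 x.2 y.1 * π y.1 y.2

theorem transitionMatrix_mulVec (f : S × A → ℝ) (x : S × A) :
    (transitionMatrix p π *ᵥ f) x = ∑ s', p x.1 x.2 s' * ∑ a', π s' a' * f (s', a') := by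
  simp [transitionMatrix, mulVec, dotProduct, Fintype.sum_prod_type, Finset.mul_sum, mul_assoc]

theorem one_sub_smul_transitionMatrix_mulVec [DecidableEq S] [DecidableEq A] (γ : ℝ)
    (f : S × A → ℝ) (x : S × A) :
    ((1 - γ • transitionMatrix p π) *ᵥ f) x =
      f x - γ * ∑ s', p x.1 x.2 s' * ∑ a', π s' a' * f (s', a') := by
  rw [sub_mulVec, one_mulVec, smul_mulVec, Pi.sub_apply, Pi.smul_apply, smul_eq_mul,
    transitionMatrix_mulVec]

variable [DecidableEq S] [DecidableEq A]

theorem transitionMatrix_mem_rowStochastic (hp0 : ∀ s a s', 0 ≤ p s a s')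
    (hp1 : ∀ s a, ∑ s' : S, p s a s' = 1) (hπ0 : ∀ s a, 0 ≤ π s a)
    (hπ1 : ∀ s : S, ∑ a : A, π s a = 1) :
    transitionMatrix p π ∈ rowStochastic ℝ (S × A) := by
  refine mem_rowStochastic_iff_sum.2 ⟨fun x y => mul_nonneg (hp0 _ _ _) (hπ0 _ _), fun x => ?_⟩
  simp [transitionMatrix, Fintype.sum_prod_type, ← Finset.mul_sum, hπ1, hp1]

theorem eq_pow_transitionMatrix (ptc : ℕ → S × A → S × A → ℝ)
    (hptc0 : ∀ x y : S × A, ptc 0 x y = if y = x then 1 else 0)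
    (hptcS : ∀ (t : ℕ) (x : S × A) (s' : S) (a' : A),
      ptc (t + 1) x (s', a') =
        π s' a' * ∑ s'' : S, ∑ a'' : A, p s'' a'' s' * ptc t x (s'', a''))
    (t : ℕ) : ptc t = transitionMatrix p π ^ t := by
  induction t with
  | zero => ext x y; simp [hptc0, one_apply, eq_comm]
  | succ t ih =>
    ext x ⟨s', a'⟩
    rw [hptcS, pow_succ, mul_apply, Fintype.sum_prod_type, Finset.mul_sum, ih]
    refine Finset.sum_congr rfl fun s'' _ => ?_
    rw [Finset.mul_sum]
    refine Finset.sum_congr rfl fun a'' _ => ?_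
    rw [transitionMatrix, of_apply]
    ring

theorem of_eq_smul_tsum_smul_pow_transitionMatrix {γ : ℝ} (hγ : |γ| < 1)
    (hM : transitionMatrix p π ∈ rowStochastic ℝ (S × A)) (ptc : ℕ → S × A → S × A → ℝ)
    (hptc0 : ∀ x y : S × A, ptc 0 x y = if y = x then 1 else 0)
    (hptcS : ∀ (t : ℕ) (x : S × A) (s' : S) (a' : A),
      ptc (t + 1) x (s', a') =
        π s' a' * ∑ s'' : S, ∑ a'' : A, p s'' a'' s' * ptc t x (s'', a''))
    (dcond : S × A → S × A → ℝ)
    (hdc : ∀ x y : S × A, dcond x y = (1 - γ) * ∑' t : ℕ, γ ^ t * ptc t x y) :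
    of dcond = (1 - γ) • ∑' t : ℕ, (γ • transitionMatrix p π) ^ t := by
  ext x y
  rw [of_apply, hdc, Matrix.smul_apply, tsum_smul_pow_apply hM hγ, smul_eq_mul]
  simp only [eq_pow_transitionMatrix p π ptc hptc0 hptcS]

end Chain

theorem stmt_5_general {S A : Type*} [Fintype S] [Fintype A] [DecidableEq S] [DecidableEq A]
    (p : S → A → S → ℝ) (hp0 : ∀ s a s', 0 ≤ p s a s')
    (hp1 : ∀ s a, ∑ s' : S, p s a s' = 1)
    (π : S → A → ℝ) (hπ0 : ∀ s a, 0 ≤ π s a) (hπ1 : ∀ s : S, ∑ a : A, π s a = 1)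
    (γ : ℝ) (hγ0 : 0 ≤ γ) (hγ1 : γ < 1)
    (pbar : S × A → ℝ) (hpb0 : ∀ x : S × A, 0 < pbar x)
    (ptc : ℕ → S × A → S × A → ℝ)
    (hptc0 : ∀ x y : S × A, ptc 0 x y = if y = x then 1 else 0)
    (hptcS : ∀ (t : ℕ) (x : S × A) (s' : S) (a' : A),
      ptc (t + 1) x (s', a') =
        π s' a' * ∑ s'' : S, ∑ a'' : A, p s'' a'' s' * ptc t x (s'', a''))
    (dcond : S × A → S × A → ℝ)
    (hdc : ∀ x y : S × A, dcond x y = (1 - γ) * ∑' t : ℕ, γ ^ t * ptc t x y) :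
    ((∃ c > 0, ∀ u ∈ {u : ℝ | ∃ f : S × A → ℝ,
          1 ≤ ∑ x : S × A, pbar x * f x ^ 2 ∧
          u = ∑ x : S × A, pbar x *
            (f x - γ * ∑ s' : S, p x.1 x.2 s' * ∑ a' : A, π s' a' * f (s', a')) ^ 2},
        c ≤ u) ↔
      BddAbove {u : ℝ | ∃ f : S × A → ℝ,
          (∑ x : S × A, pbar x * f x ^ 2) ≤ 1 ∧
          u = ∑ x : S × A, pbar x * (∑ y : S × A, dcond x y * f y) ^ 2}) ∧
    (BddAbove {u : ℝ | ∃ f : S × A → ℝ,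
          (∑ x : S × A, pbar x * f x ^ 2) ≤ 1 ∧
          u = ∑ x : S × A, pbar x * (∑ y : S × A, dcond x y * f y) ^ 2} →
      sInf {u : ℝ | ∃ f : S × A → ℝ,
          1 ≤ ∑ x : S × A, pbar x * f x ^ 2 ∧
          u = ∑ x : S × A, pbar x *
            (f x - γ * ∑ s' : S, p x.1 x.2 s' * ∑ a' : A, π s' a' * f (s', a')) ^ 2} =
        (1 - γ) ^ 2 / sSup {u : ℝ | ∃ f : S × A → ℝ,
          (∑ x : S × A, pbar x * f x ^ 2) ≤ 1 ∧
          u = ∑ x : S × A, pbar x * (∑ y : S × A, dcond x y * f y) ^ 2}) := by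
  set M := transitionMatrix p π
  have hM : M ∈ rowStochastic ℝ (S × A) :=
    transitionMatrix_mem_rowStochastic p π hp0 hp1 hπ0 hπ1
  have hγ : |γ| < 1 := abs_lt.2 ⟨by linarith, hγ1⟩
  have hdcond :=
    of_eq_smul_tsum_smul_pow_transitionMatrix p π hγ hM ptc hptc0 hptcS dcond hdc
  set T := mulVecLin (1 - γ • M)
  set D := mulVecLin (of dcond)
  have hDT : ∀ f, D (T f) = (1 - γ) • f := fun f => by
    rw [mulVecLin_apply, mulVecLin_apply, mulVec_mulVec, hdcond, smul_mul_assoc,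
      tsum_smul_pow_mul_one_sub hM hγ, smul_mulVec, one_mulVec]
  have hTD : ∀ f, T (D f) = (1 - γ) • f := fun f => by
    rw [mulVecLin_apply, mulVecLin_apply, mulVec_mulVec, hdcond, mul_smul_comm,
      one_sub_mul_tsum_smul_pow hM hγ, smul_mulVec, one_mulVec]
  have hq := QuadraticMap.posDef_weightedSumSquares hpb0
  have hk : 1 - γ ≠ 0 := by linarith
  have key := And.intro (hq.exists_pos_le_iff_bddAbove hDT hTD hk)
    (hq.sInf_eq_sq_div_sSup hDT hTD hk)
  simp only [QuadraticMap.weightedSumSquares_apply, smul_eq_mul, ← sq, T, D, M, mulVecLin_apply,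
    one_sub_smul_transitionMatrix_mulVec] at key
  simpa only [mulVec, dotProduct, of_apply] using key

theorem stmt_5 {S A : Type*} [Fintype S] [Fintype A] [DecidableEq S] [DecidableEq A]
    (p : S → A → S → ℝ) (hp0 : ∀ s a s', 0 ≤ p s a s')
    (hp1 : ∀ s a, ∑ s' : S, p s a s' = 1)
    (π : S → A → ℝ) (hπ0 : ∀ s a, 0 ≤ π s a) (hπ1 : ∀ s : S, ∑ a : A, π s a = 1)
    (γ : ℝ) (hγ0 : 0 ≤ γ) (hγ1 : γ < 1)
    (pbar : S × A → ℝ) (hpb0 : ∀ x : S × A, 0 < pbar x) (hpb1 : ∑ x : S × A, pbar x = 1)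
    (ptc : ℕ → S × A → S × A → ℝ)
    (hptc0 : ∀ x y : S × A, ptc 0 x y = if y = x then 1 else 0)
    (hptcS : ∀ (t : ℕ) (x : S × A) (s' : S) (a' : A),
      ptc (t + 1) x (s', a') =
        π s' a' * ∑ s'' : S, ∑ a'' : A, p s'' a'' s' * ptc t x (s'', a''))
    (dcond : S × A → S × A → ℝ)
    (hdc : ∀ x y : S × A, dcond x y = (1 - γ) * ∑' t : ℕ, γ ^ t * ptc t x y) :
    ((∃ c > 0, ∀ u ∈ {u : ℝ | ∃ f : S × A → ℝ,
          1 ≤ ∑ x : S × A, pbar x * f x ^ 2 ∧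
          u = ∑ x : S × A, pbar x *
            (f x - γ * ∑ s' : S, p x.1 x.2 s' * ∑ a' : A, π s' a' * f (s', a')) ^ 2},
        c ≤ u) ↔
      BddAbove {u : ℝ | ∃ f : S × A → ℝ,
          (∑ x : S × A, pbar x * f x ^ 2) ≤ 1 ∧
          u = ∑ x : S × A, pbar x * (∑ y : S × A, dcond x y * f y) ^ 2}) ∧
    (BddAbove {u : ℝ | ∃ f : S × A → ℝ,
          (∑ x : S × A, pbar x * f x ^ 2) ≤ 1 ∧
          u = ∑ x : S × A, pbar x * (∑ y : S × A, dcond x y * f y) ^ 2} →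
      sInf {u : ℝ | ∃ f : S × A → ℝ,
          1 ≤ ∑ x : S × A, pbar x * f x ^ 2 ∧
          u = ∑ x : S × A, pbar x *
            (f x - γ * ∑ s' : S, p x.1 x.2 s' * ∑ a' : A, π s' a' * f (s', a')) ^ 2} =
        (1 - γ) ^ 2 / sSup {u : ℝ | ∃ f : S × A → ℝ,
          (∑ x : S × A, pbar x * f x ^ 2) ≤ 1 ∧
          u = ∑ x : S × A, pbar x * (∑ y : S × A, dcond x y * f y) ^ 2}) :=
  stmt_5_general p hp0 hp1 π hπ0 hπ1 γ hγ0 hγ1 pbar hpb0 ptc hptc0 hptcS dcond hdc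
end

section
/- Let S and A be finite sets, p a transition kernel, π a policy, 0 ≤ γ < 1, and p̄ a distribution on S × A. Suppose p̄(s,a) ≥ p_min > 0 for all (s,a) and both p̄(s,a) ≤ p_max and q(s',a'|s,a) := π(a'|s') p(s'|s,a) ≤ p_max for all (s,a),(s',a'). Then the average discounted visitation d̄^π(s',a') = Σ_{s,a} p̄(s,a) d^π(s',a'|s,a) satisfies d̄^π(s',a') ≤ p_max for all (s',a'), and consequently Υ := inf_{Ē f² ≥ 1} Ē[((I - γP^π)f)²] ≥ (1-γ)² · p_min / p_max. -/
set_option maxHeartbeats 1000000 in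
theorem stmt_8 {S A : Type*} [Fintype S] [Fintype A] [DecidableEq S] [DecidableEq A]
    (p : S → A → S → ℝ) (hp0 : ∀ s a s', 0 ≤ p s a s')
    (hp1 : ∀ s a, ∑ s' : S, p s a s' = 1)
    (π : S → A → ℝ) (hπ0 : ∀ s a, 0 ≤ π s a) (hπ1 : ∀ s : S, ∑ a : A, π s a = 1)
    (γ : ℝ) (hγ0 : 0 ≤ γ) (hγ1 : γ < 1)
    (pbar : S × A → ℝ) (hpb1 : ∑ x : S × A, pbar x = 1)
    (pmin pmax : ℝ) (hpmin : 0 < pmin)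
    (hlb : ∀ x : S × A, pmin ≤ pbar x) (hub : ∀ x : S × A, pbar x ≤ pmax)
    (hq : ∀ (s : S) (a : A) (s' : S) (a' : A), π s' a' * p s a s' ≤ pmax)
    (ptc : ℕ → S × A → S × A → ℝ)
    (hptc0 : ∀ x y : S × A, ptc 0 x y = if y = x then 1 else 0)
    (hptcS : ∀ (t : ℕ) (x : S × A) (s' : S) (a' : A),
      ptc (t + 1) x (s', a') =
        π s' a' * ∑ s'' : S, ∑ a'' : A, p s'' a'' s' * ptc t x (s'', a''))
    (dcond : S × A → S × A → ℝ)
    (hdc : ∀ x y : S × A, dcond x y = (1 - γ) * ∑' t : ℕ, γ ^ t * ptc t x y)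
    (dbarπ : S × A → ℝ)
    (hdbarπ : ∀ y : S × A, dbarπ y = ∑ x : S × A, pbar x * dcond x y) :
    (∀ y : S × A, dbarπ y ≤ pmax) ∧
    (∀ f : S × A → ℝ, 1 ≤ ∑ x : S × A, pbar x * f x ^ 2 →
      (1 - γ) ^ 2 * pmin / pmax ≤
        ∑ x : S × A, pbar x *
          (f x - γ * ∑ s' : S, p x.1 x.2 s' * ∑ a' : A, π s' a' * f (s', a')) ^ 2) := by
  have hγ' : (0:ℝ) < 1 - γ := by linarith
  have hne : Nonempty (S × A) := by
    by_contra h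
    rw [not_nonempty_iff] at h
    simp at hpb1
  obtain ⟨x0⟩ := hne
  have hpb0 : ∀ x, 0 ≤ pbar x := fun x => le_trans hpmin.le (hlb x)
  have hpmax : 0 < pmax := lt_of_lt_of_le hpmin ((hlb x0).trans (hub x0))
  -- ptc basic facts
  have hnn : ∀ t x y, 0 ≤ ptc t x y := by
    intro t
    induction t with
    | zero => intro x y; rw [hptc0]; split <;> norm_num
    | succ t ih =>
      rintro x ⟨s', a'⟩
      rw [hptcS]
      exact mul_nonneg (hπ0 _ _) (Finset.sum_nonneg fun s'' _ =>
        Finset.sum_nonneg fun a'' _ => mul_nonneg (hp0 _ _ _) (ih x (s'', a'')))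
  -- a convenient pair form of the transition recursion
  have hptcS' : ∀ (t : ℕ) (x y : S × A),
      ptc (t + 1) x y = π y.1 y.2 * ∑ z : S × A, p z.1 z.2 y.1 * ptc t x z := by
    rintro t x ⟨s', a'⟩
    rw [hptcS,
      show (∑ s'' : S, ∑ a'' : A, p s'' a'' s' * ptc t x (s'', a''))
        = ∑ z : S × A, p z.1 z.2 s' * ptc t x z from
        (Fintype.sum_prod_type fun z : S × A => p z.1 z.2 s' * ptc t x z).symm]
  -- weighted step identity
  have hstepA : ∀ (t : ℕ) (x : S × A) (h : S × A → ℝ),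
      ∑ y : S × A, ptc (t + 1) x y * h y =
        ∑ z : S × A, ptc t x z * ∑ s' : S, p z.1 z.2 s' * ∑ a' : A, π s' a' * h (s', a') := by
    intro t x h
    calc ∑ y : S × A, ptc (t + 1) x y * h y
        = ∑ y : S × A, ∑ z : S × A, ptc t x z * (p z.1 z.2 y.1 * (π y.1 y.2 * h y)) := by
          refine Finset.sum_congr rfl fun y _ => ?_
          rw [hptcS' t x y]
          simp only [Finset.mul_sum, Finset.sum_mul]
          exact Finset.sum_congr rfl fun z _ => by ring
      _ = ∑ z : S × A, ∑ y : S × A, ptc t x z * (p z.1 z.2 y.1 * (π y.1 y.2 * h y)) :=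
          Finset.sum_comm
      _ = ∑ z : S × A, ptc t x z * ∑ s' : S, p z.1 z.2 s' * ∑ a' : A, π s' a' * h (s', a') := by
          refine Finset.sum_congr rfl fun z _ => ?_
          rw [Fintype.sum_prod_type]
          simp only [Finset.mul_sum]
  have hsum1 : ∀ t x, ∑ y : S × A, ptc t x y = 1 := by
    intro t
    induction t with
    | zero => intro x; simp [hptc0, Finset.sum_ite_eq']
    | succ t ih =>
      intro x
      have h1 := hstepA t x (fun _ => 1)
      simp only [mul_one] at h1
      calc ∑ y : S × A, ptc (t + 1) x y
          = ∑ y : S × A, ptc (t + 1) x y * 1 := by simp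
        _ = ∑ z : S × A, ptc t x z * ∑ s' : S, p z.1 z.2 s' * ∑ a' : A, π s' a' := by
            rw [← h1]; simp
        _ = ∑ z : S × A, ptc t x z := by
            refine Finset.sum_congr rfl fun z _ => ?_
            simp [hπ1, hp1]
        _ = 1 := ih x
  have hle1 : ∀ t x y, ptc t x y ≤ 1 := by
    intro t x y
    calc ptc t x y ≤ ∑ z : S × A, ptc t x z :=
          Finset.single_le_sum (fun z _ => hnn t x z) (Finset.mem_univ y)
      _ = 1 := hsum1 t x
  have hsummable : ∀ x y, Summable (fun t => γ ^ t * ptc t x y) := by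
    intro x y
    refine Summable.of_nonneg_of_le (fun t => mul_nonneg (pow_nonneg hγ0 t) (hnn t x y))
      (fun t => ?_) (summable_geometric_of_lt_one hγ0 hγ1)
    calc γ ^ t * ptc t x y ≤ γ ^ t * 1 :=
          mul_le_mul_of_nonneg_left (hle1 t x y) (pow_nonneg hγ0 t)
      _ = γ ^ t := mul_one _
  have hdc0 : ∀ x y, 0 ≤ dcond x y := by
    intro x y
    rw [hdc]
    exact mul_nonneg hγ'.le (tsum_nonneg fun t => mul_nonneg (pow_nonneg hγ0 t) (hnn t x y))
  -- part 1
  have hmub : ∀ t y, ∑ x : S × A, pbar x * ptc t x y ≤ pmax := by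
    intro t
    induction t with
    | zero =>
      intro y
      have hz : ∀ x : S × A, pbar x * ptc 0 x y = if x = y then pbar x else 0 := by
        intro x
        rw [hptc0]
        by_cases hxy : x = y
        · simp [hxy]
        · have hyx : ¬ y = x := fun hh => hxy hh.symm
          simp [hxy, hyx]
      rw [Finset.sum_congr rfl fun x _ => hz x, Finset.sum_ite_eq']
      simp [hub y]
    | succ t ih =>
      intro y
      have key : ∑ x : S × A, pbar x * ptc (t+1) x y =
          ∑ z : S × A, (π y.1 y.2 * p z.1 z.2 y.1) * ∑ x : S × A, pbar x * ptc t x z := by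
        calc ∑ x : S × A, pbar x * ptc (t+1) x y
            = ∑ x : S × A, ∑ z : S × A, (π y.1 y.2 * p z.1 z.2 y.1) * (pbar x * ptc t x z) := by
              refine Finset.sum_congr rfl fun x _ => ?_
              rw [hptcS' t x y, Finset.mul_sum, Finset.mul_sum]
              exact Finset.sum_congr rfl fun z _ => by ring
          _ = ∑ z : S × A, ∑ x : S × A, (π y.1 y.2 * p z.1 z.2 y.1) * (pbar x * ptc t x z) :=
              Finset.sum_comm
          _ = _ := by
              refine Finset.sum_congr rfl fun z _ => ?_
              rw [Finset.mul_sum]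
      rw [key]
      have hmt1 : ∑ z : S × A, ∑ x : S × A, pbar x * ptc t x z = 1 := by
        rw [Finset.sum_comm]
        calc ∑ x : S × A, ∑ z : S × A, pbar x * ptc t x z
            = ∑ x : S × A, pbar x := by
              refine Finset.sum_congr rfl fun x _ => ?_
              rw [← Finset.mul_sum, hsum1, mul_one]
          _ = 1 := hpb1
      calc ∑ z : S × A, (π y.1 y.2 * p z.1 z.2 y.1) * ∑ x : S × A, pbar x * ptc t x z
          ≤ ∑ z : S × A, pmax * ∑ x : S × A, pbar x * ptc t x z := by
            refine Finset.sum_le_sum fun z _ => ?_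
            exact mul_le_mul_of_nonneg_right (hq z.1 z.2 y.1 y.2)
              (Finset.sum_nonneg fun x _ => mul_nonneg (hpb0 x) (hnn t x z))
        _ = pmax * ∑ z : S × A, ∑ x : S × A, pbar x * ptc t x z := by rw [Finset.mul_sum]
        _ = pmax := by rw [hmt1, mul_one]
  have part1 : ∀ y : S × A, dbarπ y ≤ pmax := by
    intro y
    rw [hdbarπ]
    have hrw : ∀ x : S × A, pbar x * dcond x y
        = (1 - γ) * ∑' t : ℕ, γ ^ t * (pbar x * ptc t x y) := by
      intro x
      rw [hdc]
      calc pbar x * ((1 - γ) * ∑' t : ℕ, γ ^ t * ptc t x y)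
          = (1 - γ) * (pbar x * ∑' t : ℕ, γ ^ t * ptc t x y) := by ring
        _ = (1 - γ) * ∑' t : ℕ, pbar x * (γ ^ t * ptc t x y) := by rw [tsum_mul_left]
        _ = (1 - γ) * ∑' t : ℕ, γ ^ t * (pbar x * ptc t x y) := by
            congr 1
            exact tsum_congr fun t => by ring
    rw [Finset.sum_congr rfl fun x _ => hrw x, ← Finset.mul_sum]
    have hsum2 : ∀ x : S × A, Summable (fun t => γ ^ t * (pbar x * ptc t x y)) := by
      intro x
      exact ((hsummable x y).mul_left (pbar x)).congr fun t => by ring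
    rw [← Summable.tsum_finsetSum (fun x _ => hsum2 x)]
    have hbd : (∑' t : ℕ, ∑ x : S × A, γ ^ t * (pbar x * ptc t x y)) ≤ ∑' t : ℕ, γ ^ t * pmax := by
      refine Summable.tsum_le_tsum (fun t => ?_) ?_ ?_
      · rw [← Finset.mul_sum]
        exact mul_le_mul_of_nonneg_left (hmub t y) (pow_nonneg hγ0 t)
      · refine Summable.of_nonneg_of_le (fun t => Finset.sum_nonneg fun x _ =>
          mul_nonneg (pow_nonneg hγ0 t) (mul_nonneg (hpb0 x) (hnn t x y))) (fun t => ?_)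
          ((summable_geometric_of_lt_one hγ0 hγ1).mul_right pmax)
        rw [← Finset.mul_sum]
        exact mul_le_mul_of_nonneg_left (hmub t y) (pow_nonneg hγ0 t)
      · exact (summable_geometric_of_lt_one hγ0 hγ1).mul_right pmax
    calc (1 - γ) * ∑' t : ℕ, ∑ x : S × A, γ ^ t * (pbar x * ptc t x y)
        ≤ (1 - γ) * ∑' t : ℕ, γ ^ t * pmax := mul_le_mul_of_nonneg_left hbd hγ'.le
      _ = (1 - γ) * ((1 - γ)⁻¹ * pmax) := by
          rw [tsum_mul_right, tsum_geometric_of_lt_one hγ0 hγ1]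
      _ = pmax := by field_simp
  refine ⟨part1, ?_⟩
  intro f hf
  set g : S × A → ℝ := fun y =>
    f y - γ * ∑ s' : S, p y.1 y.2 s' * ∑ a' : A, π s' a' * f (s', a') with hg
  set h : ℕ → S × A → ℝ := fun t x => ∑ y : S × A, ptc t x y * f y with hh
  have hgdef : ∀ t x, ∑ y : S × A, ptc t x y * g y = h t x - γ * h (t + 1) x := by
    intro t x
    simp only [hh]
    rw [hstepA t x f]
    rw [Finset.mul_sum, ← Finset.sum_sub_distrib]
    exact Finset.sum_congr rfl fun y _ => by simp only [hg]; ring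
  set M : ℝ := ∑ y : S × A, |f y| with hM
  have hhbd : ∀ t x, |h t x| ≤ M := by
    intro t x
    calc |h t x| ≤ ∑ y : S × A, |ptc t x y * f y| := Finset.abs_sum_le_sum_abs _ _
      _ ≤ ∑ y : S × A, |f y| := by
          refine Finset.sum_le_sum fun y _ => ?_
          rw [abs_mul, abs_of_nonneg (hnn t x y)]
          calc ptc t x y * |f y| ≤ 1 * |f y| :=
                mul_le_mul_of_nonneg_right (hle1 t x y) (abs_nonneg _)
            _ = |f y| := one_mul _
  have husum : ∀ x, Summable (fun t => γ ^ t * h t x) := by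
    intro x
    refine Summable.of_abs ?_
    refine Summable.of_nonneg_of_le (fun t => abs_nonneg _) (fun t => ?_)
      ((summable_geometric_of_lt_one hγ0 hγ1).mul_right M)
    rw [abs_mul, abs_of_nonneg (pow_nonneg hγ0 t)]
    exact mul_le_mul_of_nonneg_left (hhbd t x) (pow_nonneg hγ0 t)
  -- key identity
  have hkey : ∀ x : S × A, ∑ y : S × A, dcond x y * g y = (1 - γ) * f x := by
    intro x
    have hrw : ∀ y : S × A, dcond x y * g y
        = (1 - γ) * ∑' t : ℕ, γ ^ t * (ptc t x y * g y) := by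
      intro y
      rw [hdc]
      calc (1 - γ) * (∑' t : ℕ, γ ^ t * ptc t x y) * g y
          = (1 - γ) * (g y * ∑' t : ℕ, γ ^ t * ptc t x y) := by ring
        _ = (1 - γ) * ∑' t : ℕ, g y * (γ ^ t * ptc t x y) := by rw [tsum_mul_left]
        _ = (1 - γ) * ∑' t : ℕ, γ ^ t * (ptc t x y * g y) := by
            congr 1
            exact tsum_congr fun t => by ring
    rw [Finset.sum_congr rfl fun y _ => hrw y, ← Finset.mul_sum]
    have hsum3 : ∀ y : S × A, Summable (fun t => γ ^ t * (ptc t x y * g y)) := by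
      intro y
      exact ((hsummable x y).mul_right (g y)).congr fun t => by ring
    rw [← Summable.tsum_finsetSum (fun y _ => hsum3 y)]
    have hin : ∀ t : ℕ, ∑ y : S × A, γ ^ t * (ptc t x y * g y)
        = γ ^ t * h t x - γ ^ (t+1) * h (t+1) x := by
      intro t
      have : ∑ y : S × A, γ ^ t * (ptc t x y * g y) = γ ^ t * ∑ y : S × A, ptc t x y * g y := by
        rw [Finset.mul_sum]
      rw [this, hgdef t x]
      ring
    rw [tsum_congr hin]
    have h1 : Summable (fun t => γ ^ t * h t x) := husum x
    have h2 : Summable (fun t => γ ^ (t + 1) * h (t + 1) x) := (summable_nat_add_iff 1).2 h1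
    rw [Summable.tsum_sub h1 h2]
    have h3 : ∑' t : ℕ, γ ^ t * h t x = γ ^ 0 * h 0 x + ∑' t : ℕ, γ ^ (t+1) * h (t+1) x :=
      Summable.tsum_eq_zero_add h1
    have h0 : h 0 x = f x := by
      simp only [hh]
      rw [Finset.sum_congr rfl fun y _ => by rw [hptc0 x y]]
      simp [Finset.sum_ite_eq', ite_mul]
    rw [h3, h0]
    ring
  -- sum of dcond over y is 1
  have hdcsum : ∀ x : S × A, ∑ y : S × A, dcond x y = 1 := by
    intro x
    rw [Finset.sum_congr rfl fun y _ => hdc x y, ← Finset.mul_sum]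
    rw [← Summable.tsum_finsetSum (fun y _ => hsummable x y)]
    have hin : ∀ t : ℕ, ∑ y : S × A, γ ^ t * ptc t x y = γ ^ t := by
      intro t
      rw [← Finset.mul_sum, hsum1, mul_one]
    rw [tsum_congr hin, tsum_geometric_of_lt_one hγ0 hγ1]
    field_simp
  -- Jensen
  have hjensen : ∀ x : S × A, ((1 - γ) * f x) ^ 2 ≤ ∑ y : S × A, dcond x y * g y ^ 2 := by
    intro x
    rw [← hkey x]
    have cs := Finset.sum_mul_sq_le_sq_mul_sq Finset.univ
      (fun y : S × A => Real.sqrt (dcond x y))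
      (fun y : S × A => Real.sqrt (dcond x y) * g y)
    have e1 : ∀ y : S × A, Real.sqrt (dcond x y) * (Real.sqrt (dcond x y) * g y)
        = dcond x y * g y := by
      intro y
      rw [← mul_assoc, Real.mul_self_sqrt (hdc0 x y)]
    have e2 : ∀ y : S × A, Real.sqrt (dcond x y) ^ 2 = dcond x y := fun y =>
      Real.sq_sqrt (hdc0 x y)
    have e3 : ∀ y : S × A, (Real.sqrt (dcond x y) * g y) ^ 2 = dcond x y * g y ^ 2 := by
      intro y
      rw [mul_pow, e2]
    rw [Finset.sum_congr rfl fun y _ => e1 y, Finset.sum_congr rfl fun y _ => e2 y,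
      Finset.sum_congr rfl fun y _ => e3 y, hdcsum x, one_mul] at cs
    exact cs
  -- assemble
  have hchain : (1 - γ) ^ 2 * ∑ x : S × A, pbar x * f x ^ 2
      ≤ (pmax / pmin) * ∑ y : S × A, pbar y * g y ^ 2 := by
    calc (1 - γ) ^ 2 * ∑ x : S × A, pbar x * f x ^ 2
        = ∑ x : S × A, pbar x * ((1 - γ) * f x) ^ 2 := by
          rw [Finset.mul_sum]
          exact Finset.sum_congr rfl fun x _ => by ring
      _ ≤ ∑ x : S × A, pbar x * ∑ y : S × A, dcond x y * g y ^ 2 :=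
          Finset.sum_le_sum fun x _ => mul_le_mul_of_nonneg_left (hjensen x) (hpb0 x)
      _ = ∑ x : S × A, ∑ y : S × A, pbar x * dcond x y * g y ^ 2 := by
          refine Finset.sum_congr rfl fun x _ => ?_
          rw [Finset.mul_sum]
          exact Finset.sum_congr rfl fun y _ => by ring
      _ = ∑ y : S × A, ∑ x : S × A, pbar x * dcond x y * g y ^ 2 := Finset.sum_comm
      _ = ∑ y : S × A, (∑ x : S × A, pbar x * dcond x y) * g y ^ 2 := by
          refine Finset.sum_congr rfl fun y _ => ?_
          rw [Finset.sum_mul]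
      _ = ∑ y : S × A, dbarπ y * g y ^ 2 :=
          Finset.sum_congr rfl fun y _ => by rw [hdbarπ]
      _ ≤ ∑ y : S × A, pmax * g y ^ 2 :=
          Finset.sum_le_sum fun y _ => mul_le_mul_of_nonneg_right (part1 y) (sq_nonneg _)
      _ ≤ ∑ y : S × A, (pmax / pmin) * (pbar y * g y ^ 2) := by
          refine Finset.sum_le_sum fun y _ => ?_
          rw [div_mul_eq_mul_div, le_div_iff₀ hpmin]
          have hmm := mul_le_mul_of_nonneg_left (hlb y) (mul_nonneg hpmax.le (sq_nonneg (g y)))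
          nlinarith [hmm]
      _ = (pmax / pmin) * ∑ y : S × A, pbar y * g y ^ 2 := by rw [Finset.mul_sum]
  have hSg : 0 ≤ ∑ y : S × A, pbar y * g y ^ 2 :=
    Finset.sum_nonneg fun y _ => mul_nonneg (hpb0 y) (sq_nonneg _)
  have h4 : (1 - γ) ^ 2 ≤ (pmax / pmin) * ∑ y : S × A, pbar y * g y ^ 2 := by
    calc (1 - γ) ^ 2 = (1 - γ) ^ 2 * 1 := by ring
      _ ≤ (1 - γ) ^ 2 * ∑ x : S × A, pbar x * f x ^ 2 :=
          mul_le_mul_of_nonneg_left hf (sq_nonneg _)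
      _ ≤ _ := hchain
  rw [div_le_iff₀ hpmax]
  rw [div_mul_eq_mul_div, le_div_iff₀ hpmin] at h4
  nlinarith [hSg]
end

section
/- Let S, A be finite, let p̄ be a probability distribution on S × A, and let Q^π : S × A → ℝ satisfy the Bellman equation Q^π(s,a) = r(s,a) + γ(P^π Q^π)(s,a) with 0 ≤ γ < 1, where (P^π f)(s,a) = Σ_{s'} p(s'|s,a) Σ_{a'} π(a'|s') f(s',a'). Let ω : S × A → ℝ be any function satisfying the balance identity Ē[ ω(S,A)·( f(S,A) - γ(P^π f)(S,A) ) ] = (1-γ)·E_{S₀∼G}[ Σ_a π(a|S₀) f(S₀,a) ] for all f : S × A → ℝ. Then Ē[ ω(S,A)·r(S,A) ] = (1-γ)·E_{S₀∼G}[ Σ_a π(a|S₀) Q^π(S₀,a) ] = V(π). -/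
theorem stmt_13 {S A : Type*} [Fintype S] [Fintype A]
    (p : S → A → S → ℝ) (hp0 : ∀ s a s', 0 ≤ p s a s')
    (hp1 : ∀ s a, ∑ s' : S, p s a s' = 1)
    (π : S → A → ℝ) (hπ0 : ∀ s a, 0 ≤ π s a) (hπ1 : ∀ s : S, ∑ a : A, π s a = 1)
    (γ : ℝ) (hγ0 : 0 ≤ γ) (hγ1 : γ < 1)
    (pbar : S × A → ℝ) (hpb0 : ∀ x : S × A, 0 ≤ pbar x) (hpb1 : ∑ x : S × A, pbar x = 1)
    (G : S → ℝ) (hG0 : ∀ s, 0 ≤ G s) (hG1 : ∑ s : S, G s = 1)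
    (r Qπ ω : S × A → ℝ)
    (hBell : ∀ x : S × A,
      Qπ x = r x + γ * ∑ s' : S, p x.1 x.2 s' * ∑ a' : A, π s' a' * Qπ (s', a'))
    (hBal : ∀ f : S × A → ℝ,
      ∑ x : S × A, pbar x *
          (ω x * (f x - γ * ∑ s' : S, p x.1 x.2 s' * ∑ a' : A, π s' a' * f (s', a'))) =
        (1 - γ) * ∑ s : S, G s * ∑ a : A, π s a * f (s, a)) :
    ∑ x : S × A, pbar x * (ω x * r x) =
      (1 - γ) * ∑ s : S, G s * ∑ a : A, π s a * Qπ (s, a) := by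
  have h := hBal Qπ
  rw [← h]
  apply Finset.sum_congr rfl
  intro x _
  have hb := hBell x
  ring_nf
  rw [hb]
  ring
end
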